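/- Let r > 0 and define f(α, β) = sup over ℓ ≥ 0 of g(ℓ, α, β), for α, β ∈ [0, π/2) (this supremum is finite and attained). Then for all α, β ∈ [0, π/2) one has f(α, β) ≤ (f(α, α) + f(β, β))/2, and equality holds if and only if α = β. -/

import Mathlib

open Real

/-- The inverse hyperbolic tangent. -/
noncomputable def artanh (x : ℝ) : ℝ := Real.log ((1 + x) / (1 - x)) / 2

/-- The candle function of hyperbolic `4`-space: `s(ℓ) = sinh³ ℓ`. -/
noncomputable def hypCandle (ℓ : ℝ) : ℝ := (sinh ℓ) ^ 3

/-- The primitive of `hypCandle` vanishing at `0`. -/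
noncomputable def hypCandleI (ℓ : ℝ) : ℝ :=
  2 / 3 + (1 / 3) * (sinh ℓ) ^ 2 * cosh ℓ - (2 / 3) * cosh ℓ

/-- The primitive of `hypCandleI` vanishing at `0`. -/
noncomputable def hypCandleII (ℓ : ℝ) : ℝ :=
  (2 / 3) * ℓ + (1 / 9) * (sinh ℓ) ^ 3 - (2 / 3) * sinh ℓ

/-- The dual test function for the `κ = -1`, `n = 4` isoperimetric problem. -/
noncomputable def hypG (r ℓ α β : ℝ) : ℝ :=
  (4 / 3) * ℓ - hypCandle ℓ / (9 * (tanh r) ^ 2 * cos α * cos β)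
    + (hypCandleI ℓ / (3 * tanh r)) * (1 / cos α + 1 / cos β) - hypCandleII ℓ

/-- `f(α, β) = sup_{ℓ ≥ 0} g(ℓ, α, β)`. -/
noncomputable def hypF (r α β : ℝ) : ℝ :=
  sSup ((fun ℓ => hypG r ℓ α β) '' Set.Ici 0)

/-!
Put `x = (tanh r cos α)⁻¹` and `y = (tanh r cos β)⁻¹`, both `> 1`. Splitting
`xy = (x - 1)(y - 1) + (x + y) - 1` gives
`g = (2/3)(ℓ + sinh ℓ) - (x - 1)(y - 1) sinh³ ℓ / 9 - (x + y) w(ℓ)` with `w ≥ 0`, so by AM–GM `g`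
only grows when `x` and `y` are both replaced by `z = 1 + √((x - 1)(y - 1))`. On the diagonal the
supremum is explicit: `m(z) = (2/3) log((z + 1)/(z - 1)) + (4/9) z/(z² - 1)`, attained at
`e^ℓ = (z + 1)/(z - 1)`. Finally `p ↦ m(1 + e^p)` is strictly convex and `z - 1` is the geometric
mean of `x - 1` and `y - 1`, so `m(z) < (m(x) + m(y))/2` unless `x = y`.
-/

open Set

theorem exists_isGreatest_image_Ici {α β : Type*} [ConditionallyCompleteLinearOrder α]
    [TopologicalSpace α] [OrderTopology α] [LinearOrder β] [TopologicalSpace β]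
    [OrderClosedTopology β] {f : α → β} {a L : α} (hf : ContinuousOn f (Ici a))
    (hL : ∀ x, L ≤ x → f x ≤ f a) : ∃ x₀, a ≤ x₀ ∧ IsGreatest (f '' Ici a) (f x₀) := by
  obtain ⟨x₀, hx₀, hmax⟩ := isCompact_Icc.exists_isMaxOn (nonempty_Icc.2 (le_max_left a L))
    (hf.mono Icc_subset_Ici_self)
  refine ⟨x₀, hx₀.1, mem_image_of_mem f hx₀.1, ?_⟩
  rintro _ ⟨x, hx, rfl⟩
  rcases le_total x (max a L) with h | h
  · exact hmax ⟨hx, h⟩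
  · exact (hL x (le_of_max_le_right h)).trans (hmax ⟨le_rfl, le_max_left a L⟩)

theorem two_mul_lt_add_of_sq_eq_mul {a b σ : ℝ} (ha : 0 ≤ a) (hb : 0 ≤ b) (hab : a ≠ b)
    (hσ₀ : 0 ≤ σ) (hσ : σ ^ 2 = a * b) : 2 * σ < a + b := by
  have : 0 < (a - b) ^ 2 := by positivity [sub_ne_zero.2 hab]
  nlinarith

theorem one_lt_inv_tanh_mul_cos {r α : ℝ} (hr : 0 < r) (hα : α ∈ Ico 0 (π / 2)) :
    1 < (tanh r * cos α)⁻¹ := by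
  have hcos : 0 < cos α := cos_pos_of_mem_Ioo ⟨by linarith [hα.1, pi_pos], hα.2⟩
  have htanh : 0 < tanh r := by
    rw [tanh_eq_sinh_div_cosh]
    exact div_pos (sinh_pos_iff.2 hr) (cosh_pos r)
  exact (one_lt_inv₀ (by positivity)).2
    (mul_lt_one_of_nonneg_of_lt_one_left htanh.le (tanh_lt_one r) (cos_le_one α))

noncomputable def dualTest (x y ℓ : ℝ) : ℝ :=
  4 / 3 * ℓ - x * y * hypCandle ℓ / 9 + (x + y) * hypCandleI ℓ / 3 - hypCandleII ℓ

theorem hypG_eq_dualTest (r ℓ α β : ℝ) :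
    hypG r ℓ α β = dualTest (tanh r * cos α)⁻¹ (tanh r * cos β)⁻¹ ℓ := by
  simp only [hypG, dualTest, div_eq_mul_inv, mul_inv, one_mul]
  ring

theorem continuous_dualTest (x y : ℝ) : Continuous (dualTest x y) := by
  unfold dualTest hypCandle hypCandleI hypCandleII
  fun_prop

theorem dualTest_zero (x y : ℝ) : dualTest x y 0 = 0 := by
  simp [dualTest, hypCandle, hypCandleI, hypCandleII]

noncomputable def dualWeight (ℓ : ℝ) : ℝ := hypCandle ℓ / 9 - hypCandleI ℓ / 3

theorem dualWeight_eq (ℓ : ℝ) :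
    dualWeight ℓ = (exp ℓ - 1) ^ 3 * (3 * exp ℓ + 1) / (36 * exp ℓ ^ 3) := by
  rw [dualWeight, hypCandle, hypCandleI, sinh_eq, cosh_eq, exp_neg]
  field_simp
  ring

theorem dualWeight_nonneg {ℓ : ℝ} (hℓ : 0 ≤ ℓ) : 0 ≤ dualWeight ℓ := by
  have : 0 ≤ exp ℓ - 1 := sub_nonneg.2 (one_le_exp hℓ)
  rw [dualWeight_eq]
  positivity

theorem dualTest_eq (x y ℓ : ℝ) :
    dualTest x y ℓ = 2 / 3 * (ℓ + sinh ℓ) - (x - 1) * (y - 1) * sinh ℓ ^ 3 / 9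
      - (x + y) * dualWeight ℓ := by
  simp only [dualTest, dualWeight, hypCandle, hypCandleII]
  ring

theorem dualTest_le_dualTest_diag {x y σ ℓ : ℝ} (hσ : σ ^ 2 = (x - 1) * (y - 1))
    (hσxy : 2 * σ ≤ x + y - 2) (hℓ : 0 ≤ ℓ) : dualTest x y ℓ ≤ dualTest (1 + σ) (1 + σ) ℓ := by
  have key : dualTest (1 + σ) (1 + σ) ℓ - dualTest x y ℓ = (x + y - 2 - 2 * σ) * dualWeight ℓ := by
    rw [dualTest_eq, dualTest_eq]
    linear_combination (-(sinh ℓ ^ 3) / 9) * hσ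
  nlinarith [mul_nonneg (by linarith : 0 ≤ x + y - 2 - 2 * σ) (dualWeight_nonneg hℓ)]

theorem dualTest_nonpos {x y ℓ : ℝ} (hx : 1 < x) (hy : 1 < y)
    (hℓ : 1 + 12 / ((x - 1) * (y - 1)) ≤ ℓ) : dualTest x y ℓ ≤ 0 := by
  have hP : 0 < (x - 1) * (y - 1) := mul_pos (by linarith) (by linarith)
  have hℓ₁ : 1 ≤ ℓ := by linarith [div_pos (by norm_num : (0 : ℝ) < 12) hP]
  have hPℓ : 12 ≤ ℓ * ((x - 1) * (y - 1)) := (div_le_iff₀ hP).1 (by linarith)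
  have hsinh : ℓ ≤ sinh ℓ := self_le_sinh_iff.2 (by linarith)
  have hPs : 12 * sinh ℓ ≤ (x - 1) * (y - 1) * sinh ℓ ^ 3 := by
    have : 12 ≤ (x - 1) * (y - 1) * sinh ℓ ^ 2 := by nlinarith
    nlinarith
  have hw := mul_nonneg (by linarith : 0 ≤ x + y) (dualWeight_nonneg (by linarith : 0 ≤ ℓ))
  rw [dualTest_eq]
  linarith

noncomputable def dualTestDiagExp (z E : ℝ) : ℝ :=
  (E - E⁻¹) / 3 - (z - 1) ^ 2 * (E - E⁻¹) ^ 3 / 72 - z * (E - 1) ^ 3 * (3 * E + 1) / (18 * E ^ 3)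

theorem dualTest_diag_eq (z ℓ : ℝ) : dualTest z z ℓ = 2 / 3 * ℓ + dualTestDiagExp z (exp ℓ) := by
  rw [dualTest_eq, dualWeight_eq, dualTestDiagExp, sinh_eq, exp_neg]
  ring

theorem sq_div_add_dualTestDiagExp_le {z E : ℝ} (hz : 1 < z) (hE : 1 ≤ E) :
    ((E * (z - 1) / (z + 1)) ^ 2 - 1) / 3 + dualTestDiagExp z E ≤ 4 / 9 * (z / (z ^ 2 - 1)) := by
  obtain ⟨a, ha, rfl⟩ : ∃ a, 0 < a ∧ z = 1 + a := ⟨z - 1, by linarith, by ring⟩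
  obtain ⟨e, he, rfl⟩ : ∃ e, 0 ≤ e ∧ E = 1 + e := ⟨E - 1, by linarith, by ring⟩
  -- the difference vanishes to second order at the maximiser `E = (z + 1)/(z - 1)`, and the
  -- cofactor has nonnegative coefficients in `z - 1` and `E - 1`
  have key : 4 / 9 * ((1 + a) / ((1 + a) ^ 2 - 1))
      - ((((1 + e) * (1 + a - 1) / (1 + a + 1)) ^ 2 - 1) / 3 + dualTestDiagExp (1 + a) (1 + e))
      = (a * (1 + e) - (a + 2)) ^ 2 *
        (16 + 48 * e + 48 * e ^ 2 + 16 * e ^ 3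
          + a * (48 + 112 * e + 72 * e ^ 2 + 16 * e ^ 3 + 4 * e ^ 4)
          + a ^ 2 * (32 + 96 * e + 84 * e ^ 2 + 28 * e ^ 3 + 4 * e ^ 4)
          + a ^ 3 * (8 * e + 12 * e ^ 2 + 6 * e ^ 3 + e ^ 4))
        / (72 * (1 + e) ^ 3 * (a + 2) ^ 2 * a) := by
    have : (1 + a) ^ 2 - 1 ≠ 0 := by nlinarith
    rw [dualTestDiagExp]
    field_simp
    ring
  rw [← sub_nonneg, key]
  positivity

noncomputable def dualTestMax (z : ℝ) : ℝ :=
  2 / 3 * log ((z + 1) / (z - 1)) + 4 / 9 * (z / (z ^ 2 - 1))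

theorem dualTest_diag_le {z ℓ : ℝ} (hz : 1 < z) (hℓ : 0 ≤ ℓ) : dualTest z z ℓ ≤ dualTestMax z := by
  have hq : 0 < (z + 1) / (z - 1) := div_pos (by linarith) (by linarith)
  -- the logarithmic term, linearised at the maximiser `exp ℓ = (z + 1)/(z - 1)`
  have hlog : 2 * (ℓ - log ((z + 1) / (z - 1))) + 1 ≤ (exp ℓ * (z - 1) / (z + 1)) ^ 2 := by
    refine (add_one_le_exp _).trans_eq ?_
    rw [two_mul, exp_add, exp_sub, exp_log hq, ← sq, div_div_eq_mul_div]
  have := sq_div_add_dualTestDiagExp_le hz (one_le_exp hℓ)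
  rw [dualTest_diag_eq, dualTestMax]
  linarith

theorem dualTest_diag_log (z : ℝ) (hz : 1 < z) :
    dualTest z z (log ((z + 1) / (z - 1))) = dualTestMax z := by
  have : z ^ 2 - 1 ≠ 0 := by nlinarith
  have : z - 1 ≠ 0 := by linarith
  rw [dualTest_diag_eq, exp_log (div_pos (by linarith) (by linarith)), dualTestDiagExp, dualTestMax]
  field_simp
  ring

theorem isGreatest_dualTest_diag {z : ℝ} (hz : 1 < z) :
    IsGreatest (dualTest z z '' Ici 0) (dualTestMax z) := by
  refine ⟨⟨_, ?_, dualTest_diag_log z hz⟩, ?_⟩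
  · exact log_nonneg ((one_le_div (by linarith)).2 (by linarith))
  · rintro _ ⟨ℓ, hℓ, rfl⟩
    exact dualTest_diag_le hz hℓ

theorem two_mul_div_sq_sub_one_le {x y σ : ℝ} (hx : 1 < x) (hy : 1 < y) (hσ₀ : 0 < σ)
    (hσ : σ ^ 2 = (x - 1) * (y - 1)) (hσxy : 2 * σ ≤ x + y - 2) :
    2 * ((1 + σ) / ((1 + σ) ^ 2 - 1)) ≤ x / (x ^ 2 - 1) + y / (y ^ 2 - 1) := by
  have hx' : 0 < x ^ 2 - 1 := by nlinarith
  have hy' : 0 < y ^ 2 - 1 := by nlinarith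
  have hσ' : 0 < (1 + σ) ^ 2 - 1 := by nlinarith
  rw [div_add_div _ _ hx'.ne' hy'.ne', mul_div_assoc', div_le_div_iff₀ hσ' (by positivity),
    ← sub_nonneg]
  have key : (x * (y ^ 2 - 1) + (x ^ 2 - 1) * y) * ((1 + σ) ^ 2 - 1)
      - 2 * (1 + σ) * ((x ^ 2 - 1) * (y ^ 2 - 1))
      = σ * (x + y - 2 - 2 * σ) * ((σ + 2) * (x + y - 2) + σ ^ 3 + 2 * σ + 4) := by
    linear_combination (2 + 2 * σ + 2 * σ ^ 2 + 2 * σ ^ 3 + 2 * y - y * σ ^ 2 + 2 * x - x * σ ^ 2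
      + 2 * x * y + 2 * x * y * σ) * hσ
  have : 0 ≤ x + y - 2 - 2 * σ := by linarith
  have : 0 ≤ x + y - 2 := by linarith
  rw [key]
  positivity

theorem dualTestMax_lt_midpoint {x y σ : ℝ} (hx : 1 < x) (hy : 1 < y) (hσ₀ : 0 < σ)
    (hσ : σ ^ 2 = (x - 1) * (y - 1)) (hσxy : 2 * σ < x + y - 2) :
    dualTestMax (1 + σ) < (dualTestMax x + dualTestMax y) / 2 := by
  have hlog : 2 * log ((1 + σ + 1) / (1 + σ - 1))
      < log ((x + 1) / (x - 1)) + log ((y + 1) / (y - 1)) := by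
    rw [add_sub_cancel_left]
    have hsq : (1 + σ + 1) / σ * ((1 + σ + 1) / σ) = (σ + 2) ^ 2 / ((x - 1) * (y - 1)) := by
      rw [← hσ]
      ring
    have hxy : (σ + 2) ^ 2 < (x + 1) * (y + 1) := by nlinarith
    have hx₁ : 0 < x - 1 := by linarith
    have hy₁ : 0 < y - 1 := by linarith
    rw [two_mul, ← log_mul (by positivity) (by positivity),
      ← log_mul (by positivity) (by positivity), hsq, div_mul_div_comm]
    exact log_lt_log (by positivity) (div_lt_div_of_pos_right hxy (by positivity))
  have := two_mul_div_sq_sub_one_le hx hy hσ₀ hσ hσxy.le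
  rw [dualTestMax, dualTestMax, dualTestMax]
  linarith

theorem dualTest_lt_midpoint {x y ℓ : ℝ} (hx : 1 < x) (hy : 1 < y) (hxy : x ≠ y) (hℓ : 0 ≤ ℓ) :
    dualTest x y ℓ < (dualTestMax x + dualTestMax y) / 2 := by
  have hP : 0 < (x - 1) * (y - 1) := mul_pos (by linarith) (by linarith)
  set σ := √((x - 1) * (y - 1))
  have hσ₀ : 0 < σ := sqrt_pos.2 hP
  have hσ : σ ^ 2 = (x - 1) * (y - 1) := sq_sqrt hP.le
  have hσxy : 2 * σ < x + y - 2 := by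
    have := two_mul_lt_add_of_sq_eq_mul (sub_nonneg.2 hx.le) (sub_nonneg.2 hy.le)
      (by simpa using hxy) hσ₀.le hσ
    linarith
  calc dualTest x y ℓ ≤ dualTest (1 + σ) (1 + σ) ℓ := dualTest_le_dualTest_diag hσ hσxy.le hℓ
    _ ≤ dualTestMax (1 + σ) := dualTest_diag_le (by linarith) hℓ
    _ < (dualTestMax x + dualTestMax y) / 2 := dualTestMax_lt_midpoint hx hy hσ₀ hσ hσxy

theorem dualTest_le_midpoint {x y ℓ : ℝ} (hx : 1 < x) (hy : 1 < y) (hℓ : 0 ≤ ℓ) :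
    dualTest x y ℓ ≤ (dualTestMax x + dualTestMax y) / 2 := by
  rcases eq_or_ne x y with rfl | hxy
  · simpa using dualTest_diag_le hx hℓ
  · exact (dualTest_lt_midpoint hx hy hxy hℓ).le

theorem exists_isGreatest_dualTest {x y : ℝ} (hx : 1 < x) (hy : 1 < y) :
    ∃ ℓ₀, 0 ≤ ℓ₀ ∧ IsGreatest (dualTest x y '' Ici 0) (dualTest x y ℓ₀) :=
  exists_isGreatest_image_Ici (continuous_dualTest x y).continuousOn fun _ hℓ =>
    (dualTest_nonpos hx hy hℓ).trans (dualTest_zero x y).ge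

/-- The supremum defining `f` is attained, and `f(α, β) ≤ (f(α, α) + f(β, β))/2` with
equality iff `α = β`. -/
theorem hypF_convexity (r : ℝ) (hr : 0 < r)
    (α β : ℝ) (hα : α ∈ Set.Ico 0 (π / 2)) (hβ : β ∈ Set.Ico 0 (π / 2)) :
    (∃ ℓ₀ : ℝ, 0 ≤ ℓ₀ ∧ IsGreatest ((fun ℓ => hypG r ℓ α β) '' Set.Ici 0) (hypG r ℓ₀ α β)) ∧
    hypF r α β ≤ (hypF r α α + hypF r β β) / 2 ∧
      (hypF r α β = (hypF r α α + hypF r β β) / 2 ↔ α = β) := by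
  have hx := one_lt_inv_tanh_mul_cos hr hα
  have hy := one_lt_inv_tanh_mul_cos hr hβ
  simp only [hypF, hypG_eq_dualTest]
  obtain ⟨ℓ₀, hℓ₀, hmax⟩ := exists_isGreatest_dualTest hx hy
  rw [hmax.csSup_eq, (isGreatest_dualTest_diag hx).csSup_eq,
    (isGreatest_dualTest_diag hy).csSup_eq]
  refine ⟨⟨ℓ₀, hℓ₀, hmax⟩, dualTest_le_midpoint hx hy hℓ₀, fun h => ?_, ?_⟩
  · have htanh : tanh r ≠ 0 := fun h0 => by norm_num [h0] at hx
    by_contra hαβ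
    refine (dualTest_lt_midpoint hx hy (fun hxy => hαβ ?_) hℓ₀).ne h
    exact injOn_cos ⟨hα.1, by linarith [hα.2, pi_pos]⟩ ⟨hβ.1, by linarith [hβ.2, pi_pos]⟩
      (mul_left_cancel₀ htanh (inv_inj.1 hxy))
  · rintro rfl
    rw [hmax.unique (isGreatest_dualTest_diag hx)]
    ring
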